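/- Let X be a reflexive real Banach space and let 𝕄 : X × X* → ℝ ∪ {+∞} be a convex, lower semicontinuous anti-selfdual Lagrangian, i.e. 𝕄*(p, x) = 𝕄(−x, −p) for all (x, p) ∈ X × X*, where 𝕄*(p, x) = sup_{(y,q) ∈ X × X*} (⟨p, y⟩ + ⟨q, x⟩ − 𝕄(y, q)). Assume there exists x₀ ∈ X such that p ↦ 𝕄(x₀, p) is bounded above on a neighborhood of the origin in X*. Then there exists x̄ ∈ X such that 𝕄(x̄, 0) = inf_{x ∈ X} 𝕄(x, 0) = 0 and (0, −x̄) ∈ ∂𝕄(x̄, 0), i.e. 𝕄(y, q) ≥ 𝕄(x̄, 0) + ⟨q, −x̄⟩ for all (y, q) ∈ X × X*. -/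

import Mathlib

open MeasureTheory Set Filter Topology

noncomputable section

/-! The marginal `V p = inf_x 𝕄(x, p)` is convex and bounded above near `0`, so separating
`(0, V 0)` from the interior of its strict epigraph yields a continuous affine minorant of `V`
that is exact at `0`. By reflexivity its slope is evaluation at some `x'`, so
`𝕄(y, q) ≥ V 0 + ⟨q, x'⟩` everywhere. Anti-selfduality gives `𝕄(·, 0) ≥ 0`, hence `V 0 ≥ 0`,
and, taking conjugates in the minorant, `𝕄(-x', 0) ≤ -V 0 ≤ 0`. So `x̄ = -x'` attains
`V 0 = 0`, and the minorant is the subgradient inequality. -/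

/-- Convexity for extended-real-valued functions. -/
def ConvexEF {F : Type*} [AddCommMonoid F] [Module ℝ F] (f : F → EReal) : Prop :=
  ∀ x y : F, ∀ a b : ℝ, 0 ≤ a → 0 ≤ b → a + b = 1 →
    f (a • x + b • y) ≤ (a : EReal) * f x + (b : EReal) * f y

theorem ConvexEF.convex_strictEpigraph {F : Type*} [AddCommMonoid F] [Module ℝ F]
    {f : F → EReal} (hf : ConvexEF f) : Convex ℝ {z : F × ℝ | f z.1 < z.2} := by
  rintro ⟨x, s⟩ hx ⟨y, t⟩ hy a b ha hb hab
  obtain ⟨r, hxr, hrs⟩ := EReal.exists_between_coe_real hx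
  obtain ⟨r', hyr', hr't⟩ := EReal.exists_between_coe_real hy
  have hrs : r < s := EReal.coe_lt_coe_iff.mp hrs
  have hr't : r' < t := EReal.coe_lt_coe_iff.mp hr't
  calc f (a • x + b • y) ≤ a * f x + b * f y := hf x y a b ha hb hab
    _ ≤ ((a * r + b * r' : ℝ) : EReal) := by
      rw [EReal.coe_add, EReal.coe_mul, EReal.coe_mul]
      gcongr
    _ < ((a * s + b * t : ℝ) : EReal) := EReal.coe_lt_coe_iff.mpr (by
      nlinarith [mul_le_mul_of_nonneg_left (min_le_left (s - r) (t - r')) ha,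
        mul_le_mul_of_nonneg_left (min_le_right (s - r) (t - r')) hb,
        lt_min (sub_pos.2 hrs) (sub_pos.2 hr't)])

theorem ConvexEF.convex_strictEpigraph_iInf {X Y : Type*} [AddCommMonoid X] [Module ℝ X]
    [AddCommMonoid Y] [Module ℝ Y] {M : X → Y → EReal}
    (hM : ConvexEF (fun z : X × Y => M z.1 z.2)) :
    Convex ℝ {z : Y × ℝ | ⨅ x, M x z.1 < z.2} := by
  have hproj : {z : Y × ℝ | ⨅ x, M x z.1 < z.2} =
      (LinearMap.prodMap (LinearMap.snd ℝ X Y) LinearMap.id) ''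
        {w : (X × Y) × ℝ | M w.1.1 w.1.2 < w.2} := by
    ext ⟨p, t⟩
    simp [iInf_lt_iff]
  rw [hproj]
  exact hM.convex_strictEpigraph.linear_image _

theorem exists_subgradient_of_le_on_nhds {E : Type*} [TopologicalSpace E] [AddCommGroup E]
    [IsTopologicalAddGroup E] [Module ℝ E] [ContinuousSMul ℝ E] {V : E → EReal}
    (hV : Convex ℝ {z : E × ℝ | V z.1 < z.2}) {p₀ : E} {v : ℝ} (hp₀ : V p₀ = v)
    {U : Set E} (hU : U ∈ 𝓝 p₀) {c : ℝ} (hc : ∀ p ∈ U, V p ≤ c) :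
    ∃ ℓ : StrongDual ℝ E, ∀ p, ((v + ℓ (p - p₀) : ℝ) : EReal) ≤ V p := by
  set S := {z : E × ℝ | V z.1 < z.2}
  have hint : ∀ t : ℝ, c < t → (p₀, t) ∈ interior S := fun t ht =>
    interior_mono (fun z hz => (hc z.1 hz.1).trans_lt (EReal.coe_lt_coe_iff.mpr hz.2))
      (mem_interior_iff_mem_nhds.mpr (prod_mem_nhds hU (Ioi_mem_nhds ht)))
  have hnot : (p₀, v) ∉ interior S := fun h => by
    have hlt : (p₀, v) ∈ S := interior_subset h
    simp only [S, mem_ofPred_eq, hp₀, lt_self_iff_false] at hlt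
  obtain ⟨f, hf⟩ := geometric_hahn_banach_open_point hV.interior isOpen_interior hnot
  have hfS : ∀ z ∈ S, f z ≤ f (p₀, v) := by
    have hclosure : closure (interior S) = closure S :=
      hV.closure_interior_eq_closure_of_nonempty_interior ⟨_, hint (c + 1) (by linarith)⟩
    intro z hz
    have hz' : z ∈ closure (interior S) := hclosure ▸ subset_closure hz
    exact closure_minimal (fun w hw => (hf w hw).le)
      (isClosed_le f.continuous continuous_const) hz'
  set φ := f.comp (ContinuousLinearMap.inl ℝ E ℝ)
  set β := f (0, 1)
  have hf_apply : ∀ p t, f (p, t) = φ p + t * β := fun p t => by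
    rw [show (p, t) = ((p, 0) : E × ℝ) + t • ((0 : E), (1 : ℝ)) by simp, map_add, map_smul]
    rfl
  -- the hyperplane is not vertical: the points `(p₀, t)`, `t > c`, lie strictly below it
  have hβ : β < 0 := by
    have h := hf _ (hint (max c v + 1) (by linarith [le_max_left c v]))
    rw [hf_apply, hf_apply] at h
    nlinarith [le_max_right c v]
  refine ⟨(-β)⁻¹ • φ, fun p => EReal.le_of_forall_lt_iff_le.mp fun t ht => ?_⟩
  have h := hfS (p, t) ht
  rw [hf_apply, hf_apply] at h
  have hφ : φ (p - p₀) ≤ (t - v) * -β := by rw [map_sub]; linarith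
  have hℓ : (-β)⁻¹ * φ (p - p₀) ≤ t - v := by
    rw [inv_mul_le_iff₀ (by linarith)]; linarith
  refine EReal.coe_le_coe_iff.mpr ?_
  simp only [FunLike.coe_smul, Pi.smul_apply, smul_eq_mul]
  linarith

section AntiSelfdual

variable {X : Type*} [AddCommGroup X] [Module ℝ X] [TopologicalSpace X]

def IsAntiSelfdual (M : X → StrongDual ℝ X → EReal) : Prop :=
  ∀ (x : X) (f : StrongDual ℝ X),
    (⨆ y : X, ⨆ g : StrongDual ℝ X, ((f y + g x : ℝ) : EReal) - M y g) = M (-x) (-f)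

variable {M : X → StrongDual ℝ X → EReal}

theorem IsAntiSelfdual.sub_le (hM : IsAntiSelfdual M) (x y : X) (f g : StrongDual ℝ X) :
    ((f y + g x : ℝ) : EReal) - M y g ≤ M (-x) (-f) :=
  (le_iSup₂_of_le (f := fun y g => ((f y + g x : ℝ) : EReal) - M y g) y g le_rfl).trans_eq
    (hM x f)

theorem IsAntiSelfdual.nonneg (hM : IsAntiSelfdual M) (x : X) : 0 ≤ M x 0 := by
  have h : -M x 0 ≤ M x 0 := by simpa using hM.sub_le (-x) x 0 0
  by_contra! hneg
  exact (EReal.neg_pos.mpr hneg).not_ge (h.trans hneg.le)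

theorem IsAntiSelfdual.le_neg_of_forall_le (hM : IsAntiSelfdual M) {v : ℝ} {xb : X}
    (h : ∀ y g, ((v + g xb : ℝ) : EReal) ≤ M y g) : M (-xb) 0 ≤ ((-v : ℝ) : EReal) := by
  have hxb := hM xb 0
  rw [neg_zero] at hxb
  rw [← hxb]
  refine iSup₂_le fun y g => (EReal.sub_le_sub le_rfl (h y g)).trans_eq ?_
  rw [← EReal.coe_sub]
  congr 1
  simp

end AntiSelfdual

theorem asd_minimization_general {X : Type*} [NormedAddCommGroup X] [NormedSpace ℝ X]
    (hrefl : Function.Surjective (NormedSpace.inclusionInDoubleDual ℝ X))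
    (M : X → StrongDual ℝ X → EReal)
    (hconv : ConvexEF (fun z : X × StrongDual ℝ X => M z.1 z.2))
    (hasd : ∀ (x : X) (f : StrongDual ℝ X),
      (⨆ y : X, ⨆ g : StrongDual ℝ X, ((f y + g x : ℝ) : EReal) - M y g) =
        M (-x) (-f))
    (x₀ : X)
    (hb : ∃ U ∈ nhds (0 : StrongDual ℝ X), ∃ c : ℝ, ∀ f ∈ U, M x₀ f ≤ (c : EReal)) :
    ∃ xb : X, M xb 0 = 0 ∧ (∀ x : X, M xb 0 ≤ M x 0) ∧
      ∀ (y : X) (g : StrongDual ℝ X),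
        M xb 0 + ((g (-xb) : ℝ) : EReal) ≤ M y g := by
  obtain ⟨U, hU, c, hc⟩ := hb
  have hM : IsAntiSelfdual M := hasd
  have hV0_le : ⨅ x, M x 0 ≤ c := (iInf_le _ x₀).trans (hc 0 (mem_of_mem_nhds hU))
  have hV0_nonneg : 0 ≤ ⨅ x, M x 0 := le_iInf hM.nonneg
  obtain ⟨v, hv⟩ : ∃ v : ℝ, ⨅ x, M x 0 = v :=
    ⟨_, (EReal.coe_toReal (hV0_le.trans_lt (EReal.coe_lt_top c)).ne
      (EReal.bot_lt_zero.trans_le hV0_nonneg).ne').symm⟩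
  obtain ⟨ℓ, hℓ⟩ := exists_subgradient_of_le_on_nhds (V := fun p => ⨅ x, M x p)
    hconv.convex_strictEpigraph_iInf hv hU
    (fun p hp => (iInf_le _ x₀).trans (hc p hp))
  obtain ⟨xb, rfl⟩ := hrefl ℓ
  have hminorant : ∀ y g, ((v + g xb : ℝ) : EReal) ≤ M y g := fun y g => by
    simpa using (hℓ g).trans (iInf_le _ y)
  have hupper := hM.le_neg_of_forall_le hminorant
  have hv0 : v = 0 := by
    have hle : (v : EReal) ≤ ((-v : ℝ) : EReal) := hv ▸ (iInf_le _ (-xb)).trans hupper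
    linarith [EReal.coe_le_coe_iff.mp hle, EReal.coe_nonneg.mp (hv ▸ hV0_nonneg)]
  subst hv0
  have hzero : M (-xb) 0 = 0 := le_antisymm (by simpa using hupper) (hM.nonneg _)
  refine ⟨-xb, hzero, fun x => hzero ▸ hM.nonneg x, fun y g => ?_⟩
  simpa [hzero] using hminorant y g

/-- Basic minimization principle for anti-selfdual Lagrangians on a reflexive Banach
space: if `𝕄` is a convex lsc anti-selfdual Lagrangian on `X × X*` and `p ↦ 𝕄(x₀,p)`
is bounded above near `0 ∈ X*`, then there is `x̄` with
`𝕄(x̄,0) = inf 𝕄(·,0) = 0` and `(0,-x̄) ∈ ∂𝕄(x̄,0)`. -/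
theorem asd_minimization {X : Type*} [NormedAddCommGroup X] [NormedSpace ℝ X]
    (hrefl : Function.Surjective (NormedSpace.inclusionInDoubleDual ℝ X))
    (M : X → StrongDual ℝ X → EReal)
    (hconv : ConvexEF (fun z : X × StrongDual ℝ X => M z.1 z.2))
    (hlsc : LowerSemicontinuous (fun z : X × StrongDual ℝ X => M z.1 z.2))
    (hasd : ∀ (x : X) (f : StrongDual ℝ X),
      (⨆ y : X, ⨆ g : StrongDual ℝ X, ((f y + g x : ℝ) : EReal) - M y g) =
        M (-x) (-f))
    (x₀ : X)
    (hb : ∃ U ∈ nhds (0 : StrongDual ℝ X), ∃ c : ℝ, ∀ f ∈ U, M x₀ f ≤ (c : EReal)) :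
    ∃ xb : X, M xb 0 = 0 ∧ (∀ x : X, M xb 0 ≤ M x 0) ∧
      ∀ (y : X) (g : StrongDual ℝ X),
        M xb 0 + ((g (-xb) : ℝ) : EReal) ≤ M y g :=
  asd_minimization_general hrefl M hconv hasd x₀ hb
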